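/- Let H ⊆ F_2^n be an affine subspace with |H| = 2^d for some 0 ≤ d ≤ n. Then H is a shift-minimal downset if and only if H = {x ∈ F_2^n : x_i = 0 for all i > d}, the coordinate subspace spanned by e_1, …, e_d. -/
import Mathlib


open Finset Pointwise

abbrev F2 (n : ℕ) := Fin n → ZMod 2

/-- The standard basis vector `e i` of `F_2^n`. -/
def stdBasis {n : ℕ} (i : Fin n) : F2 n := Pi.single i 1

/-- `A` is a downset: whenever `x i = 0` and `x + e i ∈ A`, also `x ∈ A`. -/
def IsDownset {n : ℕ} (A : Finset (F2 n)) : Prop :=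
  ∀ x : F2 n, ∀ i : Fin n, x i = 0 → x + stdBasis i ∈ A → x ∈ A

/-- `A` is shift-minimal: whenever `i < j`, `x i = x j = 0` and `x + e j ∈ A`,
also `x + e i ∈ A`. -/
def IsShiftMinimal {n : ℕ} (A : Finset (F2 n)) : Prop :=
  ∀ x : F2 n, ∀ i j : Fin n, i < j → x i = 0 → x j = 0 →
    x + stdBasis j ∈ A → x + stdBasis i ∈ A

/-- The Hamming ball of radius `r` in `F_2^n`. -/
def hamBall (n r : ℕ) : Finset (F2 n) := Finset.univ.filter fun x => hammingNorm x ≤ r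

lemma z2 (a : ZMod 2) : a = 0 ∨ a = 1 := by revert a; decide

lemma z2add (a : ZMod 2) : a + a = 0 := by revert a; decide

lemma addself {n : ℕ} (x : F2 n) : x + x = 0 := by
  funext j; exact z2add (x j)

lemma oneone : (1 : ZMod 2) + 1 = 0 := by decide

lemma stdBasis_apply {n : ℕ} (i j : Fin n) :
    stdBasis i j = if j = i then 1 else 0 := by
  simp [stdBasis, Pi.single_apply]

-- counting lemma
lemma card_coord (n c : ℕ) (h : c ≤ n) :
    (Finset.univ.filter (fun x : F2 n => ∀ i : Fin n, c ≤ (i : ℕ) → x i = 0)).card = 2 ^ c := by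
  have e : {x : F2 n // ∀ i : Fin n, c ≤ (i : ℕ) → x i = 0} ≃ (Fin c → ZMod 2) :=
    { toFun := fun x j => x.1 ⟨j.1, lt_of_lt_of_le j.2 h⟩
      invFun := fun y => ⟨fun i => if h2 : (i : ℕ) < c then y ⟨i, h2⟩ else 0, by
        intro i hi; exact dif_neg (Nat.not_lt.mpr hi)⟩
      left_inv := by
        rintro ⟨x, hx⟩
        ext i
        by_cases h2 : (i : ℕ) < c
        · simp only [dif_pos h2]
        · simp only [dif_neg h2]
          exact (hx i (Nat.not_lt.mp h2)).symm
      right_inv := by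
        intro y; funext j
        simp only [dif_pos j.2] }
  have := Fintype.card_congr e
  rw [Fintype.card_subtype] at this
  simpa using this

-- initial segment lemma
lemma initial_seg {n : ℕ} (S : Finset (Fin n))
    (hcl : ∀ i j : Fin n, i < j → j ∈ S → i ∈ S) (i : Fin n) :
    i ∈ S ↔ (i : ℕ) < S.card := by
  constructor
  · intro hi
    have hsub : Finset.Iic i ⊆ S := by
      intro k hk
      rcases eq_or_lt_of_le (Finset.mem_Iic.mp hk) with h | h
      · exact h ▸ hi
      · exact hcl k i h hi
    have := Finset.card_le_card hsub
    rw [Fin.card_Iic] at this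
    omega
  · intro hi
    by_contra hno
    have hsub : S ⊆ Finset.Iio i := by
      intro k hk
      rw [Finset.mem_Iio]
      rcases lt_trichotomy k i with h | h | h
      · exact h
      · exact absurd (h ▸ hk) hno
      · exact absurd (hcl i k h hk) hno
    have := Finset.card_le_card hsub
    rw [Fin.card_Iio] at this
    omega

/-- SMD affine subspaces (Lemma 2.17(ii)): an affine subspace `H ⊆ F_2^n` of
cardinality `2^d` is a shift-minimal downset if and only if it equals the
coordinate subspace `F_2^d = {x : xᵢ = 0 for all i ≥ d}` (0-indexed). -/
theorem smd_affine_subspace {n : ℕ} (d : ℕ) (hd : d ≤ n)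
    (H : Finset (F2 n)) (W : Submodule (ZMod 2) (F2 n)) (t : F2 n)
    (hH : (↑H : Set (F2 n)) = t +ᵥ (W : Set (F2 n)))
    (hcard : H.card = 2 ^ d) :
    (IsDownset H ∧ IsShiftMinimal H) ↔
      H = Finset.univ.filter (fun x : F2 n => ∀ i : Fin n, d ≤ (i : ℕ) → x i = 0) := by
  constructor
  · rintro ⟨hD, hS⟩
    -- H is nonempty
    have hne : H.Nonempty := by
      rw [← Finset.card_pos, hcard]; positivity
    -- 0 ∈ H
    have h0 : (0 : F2 n) ∈ H := by
      obtain ⟨x, hx⟩ := hne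
      suffices hk : ∀ k : ℕ, ∀ x : F2 n, x ∈ H → hammingNorm x ≤ k → (0 : F2 n) ∈ H from
        hk (hammingNorm x) x hx le_rfl
      intro k
      induction k with
      | zero =>
        intro x hx hn
        have : x = 0 := hammingNorm_eq_zero.mp (Nat.le_zero.mp hn)
        exact this ▸ hx
      | succ k ih =>
        intro x hx hn
        by_cases hx0 : x = 0
        · exact hx0 ▸ hx
        · obtain ⟨i, hi0⟩ := Function.ne_iff.mp hx0
          have hi : x i ≠ 0 := by simpa using hi0
          have hi1 : x i = 1 := (z2 (x i)).resolve_left hi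
          set y := x + stdBasis i with hy
          have hyi : y i = 0 := by
            simp [hy, stdBasis_apply, hi1, oneone]
          have hymem : y ∈ H := by
            apply hD y i hyi
            have : y + stdBasis i = x := by
              rw [hy, add_assoc, addself, add_zero]
            rwa [this]
          apply ih y hymem
          have hsub : Finset.univ.filter (fun j => y j ≠ 0) ⊆
              (Finset.univ.filter (fun j => x j ≠ 0)).erase i := by
            intro j hj
            simp only [Finset.mem_filter, Finset.mem_univ, true_and] at hj
            rw [Finset.mem_erase]
            constructor
            · rintro rfl; exact hj hyi
            · simp only [Finset.mem_filter, Finset.mem_univ, true_and]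
              intro hxj
              apply hj
              simp [hy, stdBasis_apply, hxj]
              intro hji
              exact hj (hji ▸ hyi)
          have hlt : hammingNorm y < hammingNorm x := by
            have h1 := Finset.card_le_card hsub
            have h2 : ((Finset.univ.filter (fun j => x j ≠ 0)).erase i).card <
                (Finset.univ.filter (fun j => x j ≠ 0)).card := by
              apply Finset.card_erase_lt_of_mem
              simp [hi]
            calc hammingNorm y ≤ _ := h1
              _ < _ := h2
          omega
    -- H coincides with W
    have hWmem : ∀ x : F2 n, x ∈ H ↔ x ∈ W := by
      have h0' : (0 : F2 n) ∈ t +ᵥ (W : Set (F2 n)) := by rw [← hH]; exact_mod_cast h0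
      obtain ⟨w, hw, hw0⟩ := h0'
      have hw0' : t + w = 0 := hw0
      have ht : t ∈ W := by
        have : t = w := by
          have : t + w = 0 := hw0'
          have h2 : t + w + w = w := by rw [this]; rw [zero_add]
          rwa [add_assoc, addself, add_zero] at h2
        exact this ▸ hw
      intro x
      rw [← Finset.mem_coe, hH]
      constructor
      · rintro ⟨v, hv, rfl⟩
        exact W.add_mem ht hv
      · intro hx
        refine ⟨t + x, W.add_mem ht hx, ?_⟩
        show t + (t + x) = x
        rw [← add_assoc, addself, zero_add]
    -- support set S
    set S : Finset (Fin n) := Finset.univ.filter (fun i => stdBasis i ∈ H) with hSdef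
    -- claim: x ∈ H, x i ≠ 0 → stdBasis i ∈ H
    have claimA : ∀ x : F2 n, x ∈ H → ∀ i : Fin n, x i ≠ 0 → stdBasis i ∈ H := by
      intro x hx i hi
      have hi1 : x i = 1 := (z2 (x i)).resolve_left hi
      have hmem : x + stdBasis i ∈ H := by
        apply hD _ i (by simp [stdBasis_apply, hi1, oneone])
        rwa [add_assoc, addself, add_zero]
      have : stdBasis i = x + (x + stdBasis i) := by
        rw [← add_assoc, addself, zero_add]
      rw [this, hWmem]
      exact W.add_mem ((hWmem x).mp hx) ((hWmem _).mp hmem)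
    -- H membership characterization
    have hchar : ∀ x : F2 n, x ∈ H ↔ ∀ i : Fin n, i ∉ S → x i = 0 := by
      intro x
      constructor
      · intro hx i hiS
        by_contra hxi
        exact hiS (by simp [hSdef, claimA x hx i hxi])
      · intro hx
        rw [hWmem]
        have : x = ∑ i : Fin n, Pi.single i (x i) := (Finset.univ_sum_single x).symm
        rw [this]
        apply Submodule.sum_mem
        intro i _
        by_cases hiS : i ∈ S
        · rcases z2 (x i) with h | h
          · rw [h, Pi.single_zero]; exact W.zero_mem
          · rw [h]
            have : stdBasis i ∈ H := by
              simp only [hSdef, Finset.mem_filter] at hiS; exact hiS.2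
            exact (hWmem _).mp this
        · rw [hx i hiS, Pi.single_zero]; exact W.zero_mem
    -- S is downward closed
    have hScl : ∀ i j : Fin n, i < j → j ∈ S → i ∈ S := by
      intro i j hij hj
      simp only [hSdef, Finset.mem_filter, Finset.mem_univ, true_and] at hj ⊢
      have := hS 0 i j hij rfl rfl (by rwa [zero_add])
      rwa [zero_add] at this
    have hseg := initial_seg S hScl
    -- rewrite H as coordinate filter with c = S.card
    have hHc : H = Finset.univ.filter
        (fun x : F2 n => ∀ i : Fin n, S.card ≤ (i : ℕ) → x i = 0) := by
      ext x
      simp only [Finset.mem_filter, Finset.mem_univ, true_and]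
      rw [hchar]
      constructor
      · intro h i hi
        exact h i (fun hmem => Nat.not_lt.mpr hi ((hseg i).mp hmem))
      · intro h i hiS
        exact h i (Nat.not_lt.mp (fun hlt => hiS ((hseg i).mpr hlt)))
    have hcle : S.card ≤ n := le_trans (Finset.card_le_univ S) (by simp)
    have hcards : (2 : ℕ) ^ S.card = 2 ^ d := by
      rw [← card_coord n S.card hcle, ← hHc, hcard]
    have : S.card = d := Nat.pow_right_injective (by norm_num) hcards
    rwa [this] at hHc
  · intro hHeq
    subst hHeq
    constructor
    · intro x i hxi hmem
      simp only [Finset.mem_filter, Finset.mem_univ, true_and] at hmem ⊢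
      intro j hj
      by_cases hji : j = i
      · exact hji ▸ hxi
      · have := hmem j hj
        simpa [stdBasis_apply, hji] using this
    · intro x i j hij hxi hxj hmem
      simp only [Finset.mem_filter, Finset.mem_univ, true_and] at hmem ⊢
      intro k hk
      have hjd : ¬ (d ≤ (j : ℕ)) := by
        intro hjd
        have := hmem j hjd
        simp [stdBasis_apply, hxj] at this
      by_cases hki : k = i
      · exfalso
        apply hjd
        subst hki
        exact le_trans hk (le_of_lt hij)
      · rw [Pi.add_apply, stdBasis_apply, if_neg hki, add_zero]
        have := hmem k hk
        have hkj : k ≠ j := fun h => hjd (h ▸ hk)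
        simpa [stdBasis_apply, hkj] using this
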